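/- In the category Graph of directed multigraphs, for every plain rule p : L ⟵l I ⟶r R and every AC ac_R over R, there exists an AC Left(p, ac_R) over L such that for every AC-disregarding direct transformation G ⇒_(p,m,m*) H with match m and comatch m*: m ⊨ Left(p, ac_R) if and only if m* ⊨ ac_R. -/

import Mathlib

open CategoryTheory CategoryTheory.Limits

universe v u

variable {C : Type u} [Category.{v} C]

/-- A plain rule: a span `L ⟵l I ⟶r R` with `l` and `r` monomorphisms. -/
structure PlainRule (C : Type u) [Category.{v} C] : Type (max u v) where
  L : C
  I : C
  R : C
  l : I ⟶ L
  r : I ⟶ R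
  mono_l : Mono l
  mono_r : Mono r

/-- An AC-disregarding direct transformation `G ⇒_(p,m) H`: a double pushout with
context `D`, match `m` and comatch `cm`. -/
structure Trafo (p : PlainRule C) (G H : C) : Type (max u v) where
  m : p.L ⟶ G
  D : C
  f : p.I ⟶ D
  k : D ⟶ G
  c : D ⟶ H
  cm : p.R ⟶ H
  po1 : IsPushout p.l f m k
  po2 : IsPushout p.r f cm c

/-- A pair of AC-disregarding transformations `H₁ ⇐_(p₁,m₁) G ⇒_(p₂,m₂) H₂`. -/
structure TrafoPair (p₁ p₂ : PlainRule C) : Type (max u v) where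
  H₁ : C
  G : C
  H₂ : C
  t₁ : Trafo p₁ G H₁
  t₂ : Trafo p₂ G H₂

/-- An extension diagram embedding `t'` into `t` via extension morphism `ext`. -/
structure TrafoEmbedding {p : PlainRule C} {G' H' G H : C}
    (t' : Trafo p G' H') (t : Trafo p G H) (ext : G' ⟶ G) : Type (max u v) where
  d : t'.D ⟶ t.D
  h : H' ⟶ H
  match_eq : t'.m ≫ ext = t.m
  f_eq : t'.f ≫ d = t.f
  po1 : IsPushout t'.k d ext t.k
  po2 : IsPushout t'.c d h t.c

/-- A transformation pair embedded into another via a common extension morphism. -/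
structure PairEmbedding {p₁ p₂ : PlainRule C} (tp' tp : TrafoPair p₁ p₂)
    (ext : tp'.G ⟶ tp.G) : Type (max u v) where
  e₁ : TrafoEmbedding tp'.t₁ tp.t₁ ext
  e₂ : TrafoEmbedding tp'.t₂ tp.t₂ ext

/-- Parallel independence of a plain transformation pair. -/
def TrafoPair.ParallelIndep {p₁ p₂ : PlainRule C} (tp : TrafoPair p₁ p₂) : Prop :=
  (∃ d₁₂ : p₁.L ⟶ tp.t₂.D, d₁₂ ≫ tp.t₂.k = tp.t₁.m) ∧
  (∃ d₂₁ : p₂.L ⟶ tp.t₁.D, d₂₁ ≫ tp.t₁.k = tp.t₂.m)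

/-- Use-delete conflict: no commuting morphism `d₁₂ : L₁ ⟶ D₂` exists. -/
def TrafoPair.UseDelete {p₁ p₂ : PlainRule C} (tp : TrafoPair p₁ p₂) : Prop :=
  ¬ ∃ d₁₂ : p₁.L ⟶ tp.t₂.D, d₁₂ ≫ tp.t₂.k = tp.t₁.m

/-- Delete-use conflict: no commuting morphism `d₂₁ : L₂ ⟶ D₁` exists. -/
def TrafoPair.DeleteUse {p₁ p₂ : PlainRule C} (tp : TrafoPair p₁ p₂) : Prop :=
  ¬ ∃ d₂₁ : p₂.L ⟶ tp.t₁.D, d₂₁ ≫ tp.t₁.k = tp.t₂.m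

/-- A transformation pair is in conflict (parallel dependent) if it is not
parallel independent. -/
def TrafoPair.InConflict {p₁ p₂ : PlainRule C} (tp : TrafoPair p₁ p₂) : Prop :=
  ¬ tp.ParallelIndep

/-- `tpI` is an initial transformation pair for `tp`. -/
def IsInitialTrafoPairFor {p₁ p₂ : PlainRule C} (tpI tp : TrafoPair p₁ p₂) : Prop :=
  ∃ fI : tpI.G ⟶ tp.G, Nonempty (PairEmbedding tpI tp fI) ∧
    ∀ (tp' : TrafoPair p₁ p₂) (f : tp'.G ⟶ tp.G), PairEmbedding tp' tp f →
      ∃! g : tpI.G ⟶ tp'.G, Nonempty (PairEmbedding tpI tp' g) ∧ g ≫ f = fI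

/-- Two transformation pairs are isomorphic if each is embedded into the other via
an isomorphism as extension morphism. -/
def PairIso {p₁ p₂ : PlainRule C} (tp tp' : TrafoPair p₁ p₂) : Prop :=
  (∃ e : tp.G ⟶ tp'.G, IsIso e ∧ Nonempty (PairEmbedding tp tp' e)) ∧
  (∃ e' : tp'.G ⟶ tp.G, IsIso e' ∧ Nonempty (PairEmbedding tp' tp e'))

section Coproducts

variable [HasBinaryCoproducts C]

lemma isPushout_coprod_left {A B X : C} (g : A ⟶ B) :
    IsPushout g (coprod.inl : A ⟶ A ⨿ X) (coprod.inl : B ⟶ B ⨿ X)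
      (coprod.map g (𝟙 X)) := by
  have w : CommSq g (coprod.inl : A ⟶ A ⨿ X) (coprod.inl : B ⟶ B ⨿ X)
      (coprod.map g (𝟙 X)) := ⟨by simp⟩
  refine IsPushout.of_isColimit' w ?_
  exact PushoutCocone.IsColimit.mk w.w
    (fun s => coprod.desc s.inl (coprod.inr ≫ s.inr))
    (fun s => coprod.inl_desc _ _)
    (fun s => by
      apply coprod.hom_ext
      · rw [coprod.inl_map_assoc, coprod.inl_desc]; exact s.condition
      · rw [coprod.inr_map_assoc, coprod.inr_desc, Category.id_comp])
    (fun s mm h1 h2 => by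
      apply coprod.hom_ext
      · rw [coprod.inl_desc]; exact h1
      · have := coprod.inr ≫= h2
        rw [coprod.inr_desc]
        rw [coprod.inr_map_assoc, Category.id_comp] at this
        exact this)

lemma isPushout_coprod_right {A B X : C} (g : A ⟶ B) :
    IsPushout g (coprod.inr : A ⟶ X ⨿ A) (coprod.inr : B ⟶ X ⨿ B)
      (coprod.map (𝟙 X) g) := by
  have w : CommSq g (coprod.inr : A ⟶ X ⨿ A) (coprod.inr : B ⟶ X ⨿ B)
      (coprod.map (𝟙 X) g) := ⟨by simp⟩
  refine IsPushout.of_isColimit' w ?_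
  exact PushoutCocone.IsColimit.mk w.w
    (fun s => coprod.desc (coprod.inl ≫ s.inr) s.inl)
    (fun s => coprod.inr_desc _ _)
    (fun s => by
      apply coprod.hom_ext
      · rw [coprod.inl_map_assoc, coprod.inl_desc, Category.id_comp]
      · rw [coprod.inr_map_assoc, coprod.inr_desc]; exact s.condition)
    (fun s mm h1 h2 => by
      apply coprod.hom_ext
      · have := coprod.inl ≫= h2
        rw [coprod.inl_desc]
        rw [coprod.inl_map_assoc, Category.id_comp] at this
        exact this
      · rw [coprod.inr_desc]; exact h1)

/-- The transformation applying `p` at the coproduct injection `inl : L ⟶ L ⨿ X`. -/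
noncomputable def coprodTrafoL (p : PlainRule C) (X : C) : Trafo p (p.L ⨿ X) (p.R ⨿ X) where
  m := coprod.inl
  D := p.I ⨿ X
  f := coprod.inl
  k := coprod.map p.l (𝟙 X)
  c := coprod.map p.r (𝟙 X)
  cm := coprod.inl
  po1 := isPushout_coprod_left p.l
  po2 := isPushout_coprod_left p.r

/-- The transformation applying `p` at the coproduct injection `inr : L ⟶ X ⨿ L`. -/
noncomputable def coprodTrafoR (p : PlainRule C) (X : C) : Trafo p (X ⨿ p.L) (X ⨿ p.R) where
  m := coprod.inr
  D := X ⨿ p.I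
  f := coprod.inr
  k := coprod.map (𝟙 X) p.l
  c := coprod.map (𝟙 X) p.r
  cm := coprod.inr
  po1 := isPushout_coprod_right p.l
  po2 := isPushout_coprod_right p.r

/-- The transformation pair `tp_(L₁+L₂) : R₁+L₂ ⇐_(p₁,i₁) L₁+L₂ ⇒_(p₂,i₂) L₁+R₂`. -/
noncomputable def coprodPair (p₁ p₂ : PlainRule C) : TrafoPair p₁ p₂ where
  H₁ := p₁.R ⨿ p₂.L
  G := p₁.L ⨿ p₂.L
  H₂ := p₁.L ⨿ p₂.R
  t₁ := coprodTrafoL p₁ p₂.L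
  t₂ := coprodTrafoR p₂ p₁.L

end Coproducts

/-! ## The category `MGraph` of directed multigraphs -/

/-- A directed multigraph: vertices, edges, and source/target maps. -/
structure MGraph : Type 1 where
  V : Type
  E : Type
  s : E → V
  t : E → V

/-- A morphism of directed multigraphs. -/
@[ext]
structure MGraphHom (G H : MGraph) where
  onV : G.V → H.V
  onE : G.E → H.E
  comm_s : ∀ e, H.s (onE e) = onV (G.s e)
  comm_t : ∀ e, H.t (onE e) = onV (G.t e)

instance : Category MGraph where
  Hom := MGraphHom
  id G := ⟨fun v => v, fun e => e, fun _ => rfl, fun _ => rfl⟩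
  comp f g := ⟨fun v => g.onV (f.onV v), fun e => g.onE (f.onE e),
    fun e => by rw [g.comm_s, f.comm_s], fun e => by rw [g.comm_t, f.comm_t]⟩

lemma MGraph.hom_ext' {G H : MGraph} {f g : G ⟶ H}
    (h1 : MGraphHom.onV f = MGraphHom.onV g) (h2 : MGraphHom.onE f = MGraphHom.onE g) :
    f = g := MGraphHom.ext h1 h2

/-- A multigraph is finite if its vertex and edge types are finite. -/
def MGraph.Fin (G : MGraph) : Prop := Finite G.V ∧ Finite G.E

/-- The class `M` of injective multigraph morphisms. -/
def InjHom {G H : MGraph} (f : G ⟶ H) : Prop :=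
  Function.Injective (MGraphHom.onV f) ∧ Function.Injective (MGraphHom.onE f)

/-- A pair of morphisms with common codomain is jointly surjective. -/
def JointlySurj {A B K : MGraph} (f : A ⟶ K) (g : B ⟶ K) : Prop :=
  (∀ v : K.V, (∃ a, MGraphHom.onV f a = v) ∨ (∃ b, MGraphHom.onV g b = v)) ∧
  (∀ e : K.E, (∃ a, MGraphHom.onE f a = e) ∨ (∃ b, MGraphHom.onE g b = e))

/-! ### Binary coproducts of multigraphs -/

/-- Disjoint union of multigraphs. -/
def MGraph.sum (G H : MGraph) : MGraph where
  V := G.V ⊕ H.V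
  E := G.E ⊕ H.E
  s := Sum.elim (fun e => Sum.inl (G.s e)) (fun e => Sum.inr (H.s e))
  t := Sum.elim (fun e => Sum.inl (G.t e)) (fun e => Sum.inr (H.t e))

def MGraph.inl' (G H : MGraph) : G ⟶ G.sum H :=
  ⟨Sum.inl, Sum.inl, fun _ => rfl, fun _ => rfl⟩

def MGraph.inr' (G H : MGraph) : H ⟶ G.sum H :=
  ⟨Sum.inr, Sum.inr, fun _ => rfl, fun _ => rfl⟩

def MGraph.desc' {G H K : MGraph} (f : G ⟶ K) (g : H ⟶ K) : G.sum H ⟶ K where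
  onV := Sum.elim (MGraphHom.onV f) (MGraphHom.onV g)
  onE := Sum.elim (MGraphHom.onE f) (MGraphHom.onE g)
  comm_s := by rintro (e | e) <;> simp [MGraph.sum, MGraphHom.comm_s]
  comm_t := by rintro (e | e) <;> simp [MGraph.sum, MGraphHom.comm_t]

lemma MGraph.inl'_desc' {G H K : MGraph} (f : G ⟶ K) (g : H ⟶ K) :
    MGraph.inl' G H ≫ MGraph.desc' f g = f := by
  apply MGraph.hom_ext' <;> rfl

lemma MGraph.inr'_desc' {G H K : MGraph} (f : G ⟶ K) (g : H ⟶ K) :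
    MGraph.inr' G H ≫ MGraph.desc' f g = g := by
  apply MGraph.hom_ext' <;> rfl

lemma MGraph.sum_hom_ext {G H K : MGraph} {f g : G.sum H ⟶ K}
    (h1 : MGraph.inl' G H ≫ f = MGraph.inl' G H ≫ g)
    (h2 : MGraph.inr' G H ≫ f = MGraph.inr' G H ≫ g) : f = g := by
  apply MGraph.hom_ext'
  · funext v
    rcases v with v | v
    · exact congrFun (congrArg MGraphHom.onV h1) v
    · exact congrFun (congrArg MGraphHom.onV h2) v
  · funext e
    rcases e with e | e
    · exact congrFun (congrArg MGraphHom.onE h1) e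
    · exact congrFun (congrArg MGraphHom.onE h2) e

def MGraph.sumCofanIsColimit (G H : MGraph) :
    IsColimit (BinaryCofan.mk (MGraph.inl' G H) (MGraph.inr' G H)) :=
  BinaryCofan.isColimitMk
    (fun s => MGraph.desc' s.inl s.inr)
    (fun s => MGraph.inl'_desc' _ _)
    (fun s => MGraph.inr'_desc' _ _)
    (fun s mm h1 h2 => by
      apply MGraph.sum_hom_ext
      · rw [h1]; exact (MGraph.inl'_desc' _ _).symm
      · rw [h2]; exact (MGraph.inr'_desc' _ _).symm)

instance (G H : MGraph) : HasColimit (pair G H) :=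
  HasColimit.mk ⟨_, MGraph.sumCofanIsColimit G H⟩

instance : HasBinaryCoproducts MGraph := hasBinaryCoproducts_of_hasColimit_pair MGraph

/-! ### Nested application conditions -/

/-- Nested application conditions over a multigraph. -/
inductive AC : MGraph → Type 1 where
  | tru : (P : MGraph) → AC P
  | ex : {P Q : MGraph} → (P ⟶ Q) → AC Q → AC P
  | neg : {P : MGraph} → AC P → AC P
  | conj : {P : MGraph} → AC P → AC P → AC P

/-- Satisfaction of an application condition by a morphism, where the extension
morphism `q` is required to be in the class `M` of injective morphisms. -/
def AC.Sat : {P G : MGraph} → (P ⟶ G) → AC P → Prop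
  | _, _, _, AC.tru _ => True
  | _, G, p, AC.ex a c => ∃ q : _ ⟶ G, InjHom q ∧ a ≫ q = p ∧ AC.Sat q c
  | _, _, p, AC.neg c => ¬ AC.Sat p c
  | _, _, p, AC.conj c₁ c₂ => AC.Sat p c₁ ∧ AC.Sat p c₂

/-- All constituent graphs of an application condition are finite. -/
def AC.FinGraphs : {P : MGraph} → AC P → Prop
  | _, AC.tru _ => True
  | _, AC.ex (Q := Q) _ c => Q.Fin ∧ AC.FinGraphs c
  | _, AC.neg c => AC.FinGraphs c
  | _, AC.conj c₁ c₂ => AC.FinGraphs c₁ ∧ AC.FinGraphs c₂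

/-- Equivalence of ACs: exactly the same morphisms satisfy them. -/
def AC.Equiv {P : MGraph} (c c' : AC P) : Prop :=
  ∀ {G : MGraph} (p : P ⟶ G), AC.Sat p c ↔ AC.Sat p c'

/-- A rule with application condition. -/
structure Rule : Type 1 where
  p : PlainRule MGraph
  ac : AC p.L

/-- A rule is finite if its rule graphs and the constituent graphs of its AC are. -/
def RuleFin (ρ : Rule) : Prop :=
  ρ.p.L.Fin ∧ ρ.p.I.Fin ∧ ρ.p.R.Fin ∧ AC.FinGraphs ρ.ac

/-- A transformation pair via rules with ACs: the matches satisfy the rule ACs. -/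
structure RTrafoPair (ρ₁ ρ₂ : Rule) : Type 1 where
  tp : TrafoPair ρ₁.p ρ₂.p
  sat₁ : AC.Sat tp.t₁.m ρ₁.ac
  sat₂ : AC.Sat tp.t₂.m ρ₂.ac

/-- Parallel independence for transformations via rules with ACs. -/
def RParallelIndep (ρ₁ ρ₂ : Rule) (tp : TrafoPair ρ₁.p ρ₂.p) : Prop :=
  (∃ d₁₂ : ρ₁.p.L ⟶ tp.t₂.D, d₁₂ ≫ tp.t₂.k = tp.t₁.m ∧
      AC.Sat (d₁₂ ≫ tp.t₂.c) ρ₁.ac) ∧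
  (∃ d₂₁ : ρ₂.p.L ⟶ tp.t₁.D, d₂₁ ≫ tp.t₁.k = tp.t₂.m ∧
      AC.Sat (d₂₁ ≫ tp.t₁.c) ρ₂.ac)


/-!
`Left` is defined by induction on the condition; only `∃(a, c)` with `a : R ⟶ Q` needs an idea.
If `I ⟶ R ⟶ Q` has a pushout complement `I ⟶ Z ⟶ Q`, then `Left(∃(a, c)) = ∃(L ⟶ L +_I Z, Left(c))`
with `Left(c)` taken over the rule `L +_I Z ⟵ Z ⟶ Q`; otherwise it is false.
Pushouts of multigraphs are computed on vertices and on edges separately, so along injective maps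
they have the familiar element-wise description in `Type`. Hence pushout complements along
injective maps are essentially unique: for an injective `q : Q ⟶ H` with `a ≫ q = m*`, the
complement `Z` maps into the context `D`, which yields an injective extension of `L ⟶ L +_I Z`
to `G` together with a double pushout for the new rule, and symmetrically from left to right.
Finally, if such a `q` exists at all, then `q⁻¹(D) ⊆ Q` is a pushout complement.
-/

namespace CategoryTheory.Limits.Types

open scoped Classical in
lemma eq_of_isPushout_of_notMem_range {X₁ X₂ X₃ X₄ : Type u} {t : X₁ ⟶ X₂} {l : X₁ ⟶ X₃}
    {r : X₂ ⟶ X₄} {b : X₃ ⟶ X₄} (h : IsPushout t l r b) {x y : X₂} (hxy : r x = r y)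
    (hx : x ∉ Set.range t) : x = y := by
  -- test against the cocone into `Option X₂` that forgets exactly the range of `t`
  let u : X₂ ⟶ Option X₂ := ↾fun x => if x ∈ Set.range t then none else some x
  have hu : t ≫ u = l ≫ ↾fun _ => none := by ext z; simp [u]
  have hdesc (z : X₂) : h.desc u _ hu (r z) = if z ∈ Set.range t then none else some z :=
    ConcreteCategory.congr_hom (h.inl_desc u _ hu) z
  have key := congrArg (h.desc u _ hu) hxy
  rw [hdesc, hdesc] at key
  split_ifs at key
  simp_all

variable {I A Z Q D G : Type u}

lemma exists_eq_of_isPushout_comp {x : I ⟶ A} {g : I ⟶ Z} {a : A ⟶ Q} {k' : Z ⟶ Q}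
    {f : I ⟶ D} {q : Q ⟶ G} {k : D ⟶ G} (S : IsPushout x g a k') (po : IsPushout x f (a ≫ q) k)
    (hx : Function.Injective x) (hq : Function.Injective q) (z : Z) : ∃ w, k w = q (k' z) := by
  rcases eq_or_eq_of_isPushout po (q (k' z)) with ⟨y, hy⟩ | hk
  · obtain ⟨i, rfl, rfl⟩ :=
      (pushoutCocone_inl_eq_inr_iff_of_isColimit S.isColimit hx y z).1 (hq hy)
    exact ⟨f i, (ConcreteCategory.congr_hom po.w i).symm.trans hy⟩
  · exact hk

lemma isPushout_preimage {r : I ⟶ A} {f : I ⟶ D} {a : A ⟶ Q} {q : Q ⟶ G} {c : D ⟶ G}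
    (po : IsPushout r f (a ≫ q) c) (hr : Function.Injective r) (hq : Function.Injective q) :
    IsPushout r (↾fun i => ⟨a (r i), f i, (ConcreteCategory.congr_hom po.w i).symm⟩ :
      I ⟶ {u : Q // ∃ w, c w = q u}) a (↾Subtype.val) := by
  have : Mono (↾Subtype.val : {u : Q // ∃ w, c w = q u} ⟶ Q) :=
    (mono_iff_injective _).2 Subtype.val_injective
  refine (isPushout_of_isPullback_of_mono' ?_ ?_ ?_).flip
  · rw [isPullback_iff]
    refine ⟨rfl, fun i j hij => hr hij.2, ?_⟩
    rintro ⟨u, w, hw⟩ y rfl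
    obtain ⟨i, rfl, rfl⟩ :=
      (pushoutCocone_inl_eq_inr_iff_of_isColimit po.isColimit hr y w).1 hw.symm
    exact ⟨i, rfl, rfl⟩
  · ext u
    simp only [Set.sup_eq_union, Set.mem_union, Set.mem_range, Set.mem_univ, iff_true]
    rcases eq_or_eq_of_isPushout po (q u) with ⟨y, hy⟩ | ⟨w, hw⟩
    · exact Or.inr ⟨y, hq hy⟩
    · exact Or.inl ⟨⟨u, w, hw⟩, rfl⟩
  · intro y y' hy _ hyy'
    exact eq_of_isPushout_of_notMem_range po (congrArg q hyy') hy

end CategoryTheory.Limits.Types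

lemma CategoryTheory.IsPushout.map_of_isPushout_map {D : Type*} [Category D] (F : C ⥤ D)
    {Z X Y P P₀ : C} {f : Z ⟶ X} {g : Z ⟶ Y} {p₀ : X ⟶ P₀} {q₀ : Y ⟶ P₀} {p : X ⟶ P}
    {q : Y ⟶ P} (h₀ : IsPushout f g p₀ q₀)
    (hF : IsPushout (F.map f) (F.map g) (F.map p₀) (F.map q₀)) (h : IsPushout f g p q) :
    IsPushout (F.map f) (F.map g) (F.map p) (F.map q) :=
  hF.of_iso (Iso.refl _) (Iso.refl _) (Iso.refl _) (F.mapIso (h₀.isoIsPushout _ _ h))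
    (by simp) (by simp) (by simp [← F.map_comp]) (by simp [← F.map_comp])

structure PushoutComplement {I R Q : C} (r : I ⟶ R) (a : R ⟶ Q) where
  pt : C
  g : I ⟶ pt
  k : pt ⟶ Q
  isPushout : IsPushout r g a k

namespace MGraph

def vertices : MGraph ⥤ Type where
  obj G := G.V
  map f := ↾f.onV

def edges : MGraph ⥤ Type where
  obj G := G.E
  map f := ↾f.onE

def src : edges ⟶ vertices where
  app G := ↾G.s
  naturality _ _ f := by ext e; exact f.comm_s e

def tgt : edges ⟶ vertices where
  app G := ↾G.t
  naturality _ _ f := by ext e; exact f.comm_t e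

lemma hom_ext_of_components {G H : MGraph} {f g : G ⟶ H} (hV : vertices.map f = vertices.map g)
    (hE : edges.map f = edges.map g) : f = g :=
  hom_ext' (congrArg (fun φ v => φ v) hV) (congrArg (fun φ e => φ e) hE)

section Pushouts

variable {Z X Y P : MGraph} {f : Z ⟶ X} {g : Z ⟶ Y} {p : X ⟶ P} {q : Y ⟶ P}

lemma isPushout_of_components (w : f ≫ p = g ≫ q)
    (hV : IsPushout (vertices.map f) (vertices.map g) (vertices.map p) (vertices.map q))
    (hE : IsPushout (edges.map f) (edges.map g) (edges.map p) (edges.map q)) :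
    IsPushout f g p q := by
  let descV (s : PushoutCocone f g) := hV.desc (vertices.map s.inl) (vertices.map s.inr)
    (by simp only [← Functor.map_comp, s.condition])
  let descE (s : PushoutCocone f g) := hE.desc (edges.map s.inl) (edges.map s.inr)
    (by simp only [← Functor.map_comp, s.condition])
  have desc_comm (s : PushoutCocone f g) (σ : edges ⟶ vertices) :
      descE s ≫ σ.app s.pt = σ.app P ≫ descV s := by
    apply hE.hom_ext
    · rw [hE.inl_desc_assoc, σ.naturality, σ.naturality_assoc, hV.inl_desc]
    · rw [hE.inr_desc_assoc, σ.naturality, σ.naturality_assoc, hV.inr_desc]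
  let desc (s : PushoutCocone f g) : P ⟶ s.pt :=
    ⟨descV s, descE s, fun e => ConcreteCategory.congr_hom (desc_comm s src) e,
      fun e => ConcreteCategory.congr_hom (desc_comm s tgt) e⟩
  refine IsPushout.of_isColimit' ⟨w⟩ (PushoutCocone.IsColimit.mk _ desc ?_ ?_ ?_)
  · intro s
    exact hom_ext_of_components (hV.inl_desc _ _ _) (hE.inl_desc _ _ _)
  · intro s
    exact hom_ext_of_components (hV.inr_desc _ _ _) (hE.inr_desc _ _ _)
  · intro s m hp hq
    apply hom_ext_of_components
    · apply hV.hom_ext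
      · rw [← Functor.map_comp, hp]; exact (hV.inl_desc _ _ _).symm
      · rw [← Functor.map_comp, hq]; exact (hV.inr_desc _ _ _).symm
    · apply hE.hom_ext
      · rw [← Functor.map_comp, hp]; exact (hE.inl_desc _ _ _).symm
      · rw [← Functor.map_comp, hq]; exact (hE.inr_desc _ _ _).symm

variable (f g) in
noncomputable def pushoutIncidence (σ : edges ⟶ vertices) :
    pushout (edges.map f) (edges.map g) ⟶ pushout (vertices.map f) (vertices.map g) :=
  pushout.map _ _ _ _ (σ.app X) (σ.app Y) (σ.app Z) (σ.naturality f) (σ.naturality g)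

variable (f g) in
noncomputable def pushoutGraph : MGraph where
  V := pushout (vertices.map f) (vertices.map g)
  E := pushout (edges.map f) (edges.map g)
  s := pushoutIncidence f g src
  t := pushoutIncidence f g tgt

variable (f g) in
noncomputable def pushoutInl : X ⟶ pushoutGraph f g where
  onV v := pushout.inl (vertices.map f) (vertices.map g) v
  onE e := pushout.inl (edges.map f) (edges.map g) e
  comm_s e := ConcreteCategory.congr_hom (pushout.inl_desc (C := Type) _ _ _) e
  comm_t e := ConcreteCategory.congr_hom (pushout.inl_desc (C := Type) _ _ _) e

variable (f g) in
noncomputable def pushoutInr : Y ⟶ pushoutGraph f g where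
  onV v := pushout.inr (vertices.map f) (vertices.map g) v
  onE e := pushout.inr (edges.map f) (edges.map g) e
  comm_s e := ConcreteCategory.congr_hom (pushout.inr_desc (C := Type) _ _ _) e
  comm_t e := ConcreteCategory.congr_hom (pushout.inr_desc (C := Type) _ _ _) e

variable (f g) in
lemma isPushout_pushoutGraph : IsPushout f g (pushoutInl f g) (pushoutInr f g) :=
  isPushout_of_components
    (hom_ext_of_components (pushout.condition (f := vertices.map f) (g := vertices.map g))
      (pushout.condition (f := edges.map f) (g := edges.map g)))
    (IsPushout.of_hasPushout _ _) (IsPushout.of_hasPushout _ _)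

lemma isPushout_map_vertices (h : IsPushout f g p q) :
    IsPushout (vertices.map f) (vertices.map g) (vertices.map p) (vertices.map q) :=
  (isPushout_pushoutGraph f g).map_of_isPushout_map _ (IsPushout.of_hasPushout _ _) h

lemma isPushout_map_edges (h : IsPushout f g p q) :
    IsPushout (edges.map f) (edges.map g) (edges.map p) (edges.map q) :=
  (isPushout_pushoutGraph f g).map_of_isPushout_map _ (IsPushout.of_hasPushout _ _) h

end Pushouts

def vertexGraph : MGraph := ⟨Unit, Empty, Empty.elim, Empty.elim⟩

def edgeGraph : MGraph := ⟨Bool, Unit, fun _ => false, fun _ => true⟩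

def vertexHom {G : MGraph} (v : G.V) : vertexGraph ⟶ G :=
  ⟨fun _ => v, Empty.elim, fun e => e.elim, fun e => e.elim⟩

def edgeHom {G : MGraph} (e : G.E) : edgeGraph ⟶ G :=
  ⟨fun b => cond b (G.t e) (G.s e), fun _ => e, fun _ => rfl, fun _ => rfl⟩

end MGraph

open MGraph

namespace InjHom

variable {X Y Z : MGraph}

lemma of_mono (f : X ⟶ Y) [Mono f] : InjHom f := by
  refine ⟨fun v v' h => ?_, fun e e' h => ?_⟩
  · have := (cancel_mono f).1
      (hom_ext' (f := vertexHom v ≫ f) (g := vertexHom v' ≫ f) (funext fun _ => h) (funext nofun))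
    exact congrFun (congrArg MGraphHom.onV this) ()
  · have hV : (edgeHom e ≫ f).onV = (edgeHom e' ≫ f).onV := by
      funext b
      cases b
      · exact (f.comm_s e).symm.trans ((congrArg Y.s h).trans (f.comm_s e'))
      · exact (f.comm_t e).symm.trans ((congrArg Y.t h).trans (f.comm_t e'))
    have := (cancel_mono f).1 (hom_ext' hV (funext fun _ => h))
    exact congrFun (congrArg MGraphHom.onE this) ()

lemma mono {f : X ⟶ Y} (hf : InjHom f) : Mono f :=
  ⟨fun _ _ h => hom_ext' (funext fun v => hf.1 (congrFun (congrArg MGraphHom.onV h) v))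
    (funext fun e => hf.2 (congrFun (congrArg MGraphHom.onE h) e))⟩

lemma comp {f : X ⟶ Y} {g : Y ⟶ Z} (hf : InjHom f) (hg : InjHom g) : InjHom (f ≫ g) :=
  ⟨hg.1.comp hf.1, hg.2.comp hf.2⟩

lemma of_comp {f : X ⟶ Y} {g : Y ⟶ Z} (h : InjHom (f ≫ g)) : InjHom f :=
  ⟨fun _ _ hv => h.1 (congrArg g.onV hv), fun _ _ he => h.2 (congrArg g.onE he)⟩

lemma of_isPushout {P : MGraph} {f : Z ⟶ X} {g : Z ⟶ Y} {p : X ⟶ P} {q : Y ⟶ P}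
    (h : IsPushout f g p q) (hf : InjHom f) : InjHom q :=
  ⟨Types.pushoutCocone_inr_injective_of_isColimit (isPushout_map_vertices h).isColimit hf.1,
    Types.pushoutCocone_inr_injective_of_isColimit (isPushout_map_edges h).isColimit hf.2⟩

end InjHom

namespace MGraph

lemma exists_lift {Z D G : MGraph} {k : D ⟶ G} (hk : InjHom k) (u : Z ⟶ G)
    (hV : ∀ v, ∃ w, k.onV w = u.onV v) (hE : ∀ e, ∃ w, k.onE w = u.onE e) :
    ∃ d : Z ⟶ D, d ≫ k = u := by
  choose dV hdV using hV
  choose dE hdE using hE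
  refine ⟨⟨dV, dE, fun e => hk.1 ?_, fun e => hk.1 ?_⟩, hom_ext' (funext hdV) (funext hdE)⟩
  · rw [← k.comm_s, hdE, hdV, u.comm_s]
  · rw [← k.comm_t, hdE, hdV, u.comm_t]

def preimage {Q D H : MGraph} (q : Q ⟶ H) (c : D ⟶ H) : MGraph where
  V := {u : Q.V // ∃ w, c.onV w = q.onV u}
  E := {e : Q.E // ∃ w, c.onE w = q.onE e}
  s e := ⟨Q.s e.1, by obtain ⟨w, hw⟩ := e.2; exact ⟨D.s w, by rw [← c.comm_s, hw, q.comm_s]⟩⟩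
  t e := ⟨Q.t e.1, by obtain ⟨w, hw⟩ := e.2; exact ⟨D.t w, by rw [← c.comm_t, hw, q.comm_t]⟩⟩

def preimage.ι {Q D H : MGraph} (q : Q ⟶ H) (c : D ⟶ H) : preimage q c ⟶ Q :=
  ⟨Subtype.val, Subtype.val, fun _ => rfl, fun _ => rfl⟩

def preimage.lift {I R Q D H : MGraph} {r : I ⟶ R} {a : R ⟶ Q} {q : Q ⟶ H} {f : I ⟶ D}
    {c : D ⟶ H} (w : r ≫ a ≫ q = f ≫ c) : I ⟶ preimage q c where
  onV i := ⟨a.onV (r.onV i), f.onV i, (congrFun (congrArg MGraphHom.onV w) i).symm⟩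
  onE i := ⟨a.onE (r.onE i), f.onE i, (congrFun (congrArg MGraphHom.onE w) i).symm⟩
  comm_s i := Subtype.ext ((r ≫ a).comm_s i)
  comm_t i := Subtype.ext ((r ≫ a).comm_t i)

section PushoutComplements

variable {I A Z Q D G : MGraph} {x : I ⟶ A} {g : I ⟶ Z} {a : A ⟶ Q} {k' : Z ⟶ Q}
  {f : I ⟶ D} {m : A ⟶ G} {k : D ⟶ G} {q : Q ⟶ G}

lemma nonempty_pushoutComplement (po : IsPushout x f (a ≫ q) k) (hx : InjHom x)
    (hq : InjHom q) : Nonempty (PushoutComplement x a) :=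
  ⟨⟨preimage q k, preimage.lift po.w, preimage.ι q k,
    isPushout_of_components rfl
      (Types.isPushout_preimage (a := vertices.map a) (q := vertices.map q)
        (isPushout_map_vertices po) hx.1 hq.1)
      (Types.isPushout_preimage (a := edges.map a) (q := edges.map q)
        (isPushout_map_edges po) hx.2 hq.2)⟩⟩

lemma exists_isPushout_of_eq_comp (S : IsPushout x g a k') (po : IsPushout x f m k)
    (hx : InjHom x) (hq : InjHom q) (haq : a ≫ q = m) :
    ∃ d : Z ⟶ D, g ≫ d = f ∧ InjHom d ∧ IsPushout k' d q k := by
  subst haq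
  have hk := InjHom.of_isPushout po hx
  obtain ⟨d, hd⟩ := exists_lift hk (k' ≫ q)
    (Types.exists_eq_of_isPushout_comp (q := vertices.map q) (isPushout_map_vertices S)
      (isPushout_map_vertices po) hx.1 hq.1)
    (Types.exists_eq_of_isPushout_comp (q := edges.map q) (isPushout_map_edges S)
      (isPushout_map_edges po) hx.2 hq.2)
  have hgd : g ≫ d = f := by
    have := hk.mono
    rw [← cancel_mono k, Category.assoc, hd, ← Category.assoc, ← S.w, Category.assoc, po.w]
  refine ⟨d, hgd, InjHom.of_comp (hd ▸ (InjHom.of_isPushout S hx).comp hq), ?_⟩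
  exact IsPushout.of_top (hgd ▸ po) hd.symm S

lemma exists_isPushout_of_isPushout_comp {d : Z ⟶ D} (S : IsPushout x g a k')
    (po : IsPushout x (g ≫ d) m k) (hd : InjHom d) :
    ∃ q : Q ⟶ G, a ≫ q = m ∧ InjHom q ∧ IsPushout k' d q k :=
  have po' := IsPushout.of_top' po S
  ⟨_, S.inl_desc _ _ _, InjHom.of_isPushout po'.flip hd, po'⟩

end PushoutComplements

lemma exists_dpo_of_extension {I L R Z Y Q G H D : MGraph} {l : I ⟶ L} {g : I ⟶ Z}
    {b : L ⟶ Y} {k₁ : Z ⟶ Y} {r : I ⟶ R} {a : R ⟶ Q} {k₂ : Z ⟶ Q} {f : I ⟶ D}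
    {m : L ⟶ G} {k : D ⟶ G} {cm : R ⟶ H} {c : D ⟶ H}
    (S₁ : IsPushout l g b k₁) (S₂ : IsPushout r g a k₂) (po₁ : IsPushout l f m k)
    (po₂ : IsPushout r f cm c) (hl : InjHom l) {q₁ : Y ⟶ G} (hq₁ : InjHom q₁)
    (hbq : b ≫ q₁ = m) :
    ∃ (d : Z ⟶ D) (q₂ : Q ⟶ H), InjHom q₂ ∧ a ≫ q₂ = cm ∧
      IsPushout k₁ d q₁ k ∧ IsPushout k₂ d q₂ c := by
  obtain ⟨d, rfl, hd, po₁'⟩ := exists_isPushout_of_eq_comp S₁ po₁ hl hq₁ hbq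
  obtain ⟨q₂, haq, hq₂, po₂'⟩ := exists_isPushout_of_isPushout_comp S₂ po₂ hd
  exact ⟨d, q₂, hq₂, haq, po₁', po₂'⟩

end MGraph

open scoped Classical in
noncomputable def AC.shiftLeft : {R : MGraph} → AC R → {I L : MGraph} → (I ⟶ L) → (I ⟶ R) → AC L
  | _, .tru _, _, L, _, _ => .tru L
  | _, .neg c, _, _, l, r => .neg (c.shiftLeft l r)
  | _, .conj c₁ c₂, _, _, l, r => .conj (c₁.shiftLeft l r) (c₂.shiftLeft l r)
  | _, .ex a c, _, _, l, r =>
      if h : Nonempty (PushoutComplement r a) then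
        .ex (pushoutInl l h.some.g) (c.shiftLeft (pushoutInr l h.some.g) h.some.k)
      -- false: by `nonempty_pushoutComplement` no injective `q` then has `a ≫ q = m*`
      else .neg (.tru _)

theorem AC.sat_shiftLeft_iff {R : MGraph} (c : AC R) {I L : MGraph} {l : I ⟶ L} {r : I ⟶ R}
    (hl : InjHom l) (hr : InjHom r) {G H D : MGraph} {m : L ⟶ G} {f : I ⟶ D} {k : D ⟶ G}
    {cc : D ⟶ H} {cm : R ⟶ H} (po₁ : IsPushout l f m k) (po₂ : IsPushout r f cm cc) :
    (c.shiftLeft l r).Sat m ↔ c.Sat cm := by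
  induction c generalizing I L G H D with
  | tru => exact Iff.rfl
  | neg c ih => exact not_congr (ih hl hr po₁ po₂)
  | conj c₁ c₂ ih₁ ih₂ => exact and_congr (ih₁ hl hr po₁ po₂) (ih₂ hl hr po₁ po₂)
  | ex a c ih =>
    unfold shiftLeft
    split_ifs with h
    · set pc := h.some
      have S := isPushout_pushoutGraph l pc.g
      have hk₁ := InjHom.of_isPushout S hl
      have hk₂ := InjHom.of_isPushout pc.isPushout hr
      simp only [Sat]
      constructor
      · rintro ⟨q₁, hq₁, hbq, hsat⟩
        obtain ⟨d, q₂, hq₂, haq, po₁', po₂'⟩ :=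
          exists_dpo_of_extension S pc.isPushout po₁ po₂ hl hq₁ hbq
        exact ⟨q₂, hq₂, haq, (ih hk₁ hk₂ po₁' po₂').1 hsat⟩
      · rintro ⟨q₂, hq₂, haq, hsat⟩
        obtain ⟨d, q₁, hq₁, hbq, po₂', po₁'⟩ :=
          exists_dpo_of_extension pc.isPushout S po₂ po₁ hr hq₂ haq
        exact ⟨q₁, hq₁, hbq, (ih hk₁ hk₂ po₁' po₂').2 hsat⟩
    · simp only [Sat, not_true_eq_false, false_iff, not_exists, not_and]
      intro q hq haq _
      exact h (nonempty_pushoutComplement (haq ▸ po₂) hr hq)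

/-- Shifting of application conditions over rules (from right to left) in the category
of directed multigraphs: for every plain rule `p : L ⟵l I ⟶r R` and every AC `acR`
over `R`, there is an AC over `L` that is satisfied by the match `m` of any
AC-disregarding direct transformation `G ⇒_(p,m,m*) H` iff the comatch `m*` satisfies
`acR`. -/
theorem left_shift_of_ACs_over_rules
    (p : PlainRule MGraph) (acR : AC p.R) :
    ∃ acL : AC p.L, ∀ {G H : MGraph} (t : Trafo p G H),
      AC.Sat t.m acL ↔ AC.Sat t.cm acR :=
  have := p.mono_l
  have := p.mono_r
  ⟨acR.shiftLeft p.l p.r, fun t => acR.sat_shiftLeft_iff (.of_mono p.l) (.of_mono p.r) t.po1 t.po2⟩
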